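/- arXiv:1006.1538 — 4 statements merged into one kernel-verified Lean document; each statement's English description precedes it below -/
import Mathlib

section
/- For every λ ∈ ℂ with φ_q(λ) ≠ 0 and every s ∈ ℂ with s² = Δ(λ)² − 1, one has ξ(λ,s) = 2s(1 + A(λ)) − J(λ). In particular, ξ(λ,s) − 2s equals a polynomial expression in λ that does not depend on the choice of the square root s. -/
open Polynomial

/-!
Both solutions are explicit near the perturbation. `f⁺ = θ̃ + m₊ φ̃` everywhere, since the two
agree for `n > p` and `ã n ≠ 0` lets a solution be continued uniquely downwards; and since
`u (-1) = 0`, the recurrence at `0` gives `f⁻₀ = 1`, `ã₀ f⁻₁ = a₀ m₋ - v₀`. So `ξ` is explicit in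
`θ̃₀, θ̃₁, φ̃₀, φ̃₁, m₊, m₋`, and the only nonlinear input is `m₊ m₋ φ_q = -θ_{q+1}`, i.e.
`φ̂² - s² = -θ_{q+1} φ_q`. This follows from `s² = Δ² - 1` and `θ_q φ_{q+1} - θ_{q+1} φ_q = 1`,
which holds because the Wronskian `a n (θ n φ (n+1) - θ (n+1) φ n)` is constant and `a q = a 0`.
-/

section Jacobi

variable {R : Type*} [CommRing R]

def IsJacobiSolution (a b : ℤ → R) (lam : R) (y : ℤ → R) : Prop :=
  ∀ n : ℤ, a (n - 1) * y (n - 1) + a n * y (n + 1) + b n * y n = lam * y n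

def jacobiWronskian (a y z : ℤ → R) (n : ℤ) : R :=
  a n * (y n * z (n + 1) - y (n + 1) * z n)

namespace IsJacobiSolution

variable {a b : ℤ → R} {lam : R} {y z : ℤ → R}

theorem aeval_add_mul {S A : Type*} [CommRing S] [CommRing A] [Algebra S A] {a b : ℤ → S}
    {y z : ℤ → S[X]} (hy : IsJacobiSolution (fun n => C (a n)) (fun n => C (b n)) X y)
    (hz : IsJacobiSolution (fun n => C (a n)) (fun n => C (b n)) X z) (x m : A) :
    IsJacobiSolution (fun n => algebraMap S A (a n)) (fun n => algebraMap S A (b n)) x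
      (fun n => Polynomial.aeval x (y n) + m * Polynomial.aeval x (z n)) := fun n => by
  have hy' := congrArg (Polynomial.aeval x) (hy n)
  have hz' := congrArg (Polynomial.aeval x) (hz n)
  simp only [map_add, map_mul, aeval_C, aeval_X] at hy' hz'
  linear_combination hy' + m * hz'

theorem jacobiWronskian_add_one (hy : IsJacobiSolution a b lam y)
    (hz : IsJacobiSolution a b lam z) (n : ℤ) :
    jacobiWronskian a y z (n + 1) = jacobiWronskian a y z n := by
  have hy' := hy (n + 1)
  have hz' := hz (n + 1)
  rw [add_sub_cancel_right] at hy' hz'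
  unfold jacobiWronskian
  linear_combination y (n + 1) * hz' - z (n + 1) * hy'

theorem jacobiWronskian_eq_at_zero (hy : IsJacobiSolution a b lam y)
    (hz : IsJacobiSolution a b lam z) (n : ℤ) :
    jacobiWronskian a y z n = jacobiWronskian a y z 0 := by
  induction n using Int.induction_on with
  | zero => rfl
  | succ k ih => rw [jacobiWronskian_add_one hy hz, ih]
  | pred k ih => rw [← ih, ← jacobiWronskian_add_one hy hz, sub_add_cancel]

theorem mul_sub_mul_eq_one_of_coeff_eq [IsDomain R] (hy : IsJacobiSolution a b lam y)
    (hz : IsJacobiSolution a b lam z) (hy0 : y 0 = 1) (hy1 : y 1 = 0) (hz0 : z 0 = 0)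
    (hz1 : z 1 = 1) {n : ℤ} (han : a n = a 0) (ha0 : a 0 ≠ 0) :
    y n * z (n + 1) - y (n + 1) * z n = 1 := by
  have h := jacobiWronskian_eq_at_zero hy hz n
  simp only [jacobiWronskian, zero_add, hy0, hy1, hz0, hz1, han] at h
  exact mul_left_cancel₀ ha0 (by simpa using h)

theorem eq_of_eqOn_Ioi [IsDomain R] (ha : ∀ n, a n ≠ 0) (hy : IsJacobiSolution a b lam y)
    (hz : IsJacobiSolution a b lam z) {p : ℤ} (h : Set.EqOn y z (Set.Ioi p)) : y = z := by
  have key : ∀ n ≤ p + 1, y n = z n ∧ y (n + 1) = z (n + 1) := by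
    intro n hn
    induction n, hn using Int.leInductionDown with
    | base => exact ⟨h (by simp), h (by simp)⟩
    | pred m _ ih =>
      refine ⟨?_, by rw [sub_add_cancel]; exact ih.1⟩
      apply mul_left_cancel₀ (ha (m - 1))
      linear_combination hy m - hz m + (lam - b m) * ih.1 - a m * ih.2
  funext n
  rcases le_or_gt n p with hn | hn
  · exact (key n (by omega)).1
  · exact h hn

theorem mul_add_one_eq_of_eq {a' b' : ℤ → R} {n : ℤ} (hy : IsJacobiSolution a b lam y)
    (hz : IsJacobiSolution a' b' lam z) (ha : a' (n - 1) = a (n - 1))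
    (h₁ : z (n - 1) = y (n - 1)) (h₂ : z n = y n) :
    a' n * z (n + 1) = a n * y (n + 1) + (b n - b' n) * y n := by
  linear_combination hz n - hy n - z (n - 1) * ha - a (n - 1) * h₁ + (lam - b' n) * h₂

end IsJacobiSolution

end Jacobi

theorem stmt4_general
    (q : ℕ)
    (a b : ℤ → ℝ)
    (ha_per : ∀ n : ℤ, a (n + (q : ℤ)) = a n)
    (ha_pos : ∀ n : ℤ, 0 < a n)
    (θ φ : ℤ → Polynomial ℝ)
    (hθ_rec : ∀ n : ℤ,
      C (a (n - 1)) * θ (n - 1) + C (a n) * θ (n + 1) + C (b n) * θ n = X * θ n)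
    (hφ_rec : ∀ n : ℤ,
      C (a (n - 1)) * φ (n - 1) + C (a n) * φ (n + 1) + C (b n) * φ n = X * φ n)
    (hθ0 : θ 0 = 1) (hθ1 : θ 1 = 0) (hφ0 : φ 0 = 0) (hφ1 : φ 1 = 1)
    (Δl : Polynomial ℝ) (hΔl : Δl = C ((2:ℝ)⁻¹) * (φ ((q:ℤ) + 1) + θ (q:ℤ)))
    (φh : Polynomial ℝ) (hφh : φh = C ((2:ℝ)⁻¹) * (φ ((q:ℤ) + 1) - θ (q:ℤ)))
    (p : ℕ)
    (u v : ℤ → ℝ)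
    (hu_supp : ∀ n : ℤ, (n < 0 ∨ (p:ℤ) < n) → u n = 0)
    (hat_pos : ∀ n : ℤ, 0 < a n + u n)
    (θt φt : ℤ → Polynomial ℝ)
    (hθt_rec : ∀ n : ℤ,
      C (a (n - 1) + u (n - 1)) * θt (n - 1) + C (a n + u n) * θt (n + 1)
        + C (b n + v n) * θt n = X * θt n)
    (hφt_rec : ∀ n : ℤ,
      C (a (n - 1) + u (n - 1)) * φt (n - 1) + C (a n + u n) * φt (n + 1)
        + C (b n + v n) * φt n = X * φt n)
    (hθt_bc : ∀ n : ℤ, (p:ℤ) < n → θt n = θ n)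
    (hφt_bc : ∀ n : ℤ, (p:ℤ) < n → φt n = φ n)
    (Ap : Polynomial ℝ)
    (hAp : Ap = C ((2:ℝ)⁻¹) *
      ((C ((a 0 + u 0) / a 0) * φt 1 - φ 1) + C (v 0 / a 0) * φt 0 + (θt 0 - θ 0)))
    (Jp : Polynomial ℝ)
    (hJp : Jp = -(C ((a 0 + u 0) / a 0) * φ (q:ℤ) * θt 1
      + φh * (C ((a 0 + u 0) / a 0) * φt 1 - θt 0)
      + C (v 0 / a 0) * (φ (q:ℤ) * θt 0 + φh * φt 0)
      + θ ((q:ℤ) + 1) * φt 0))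
    (lam s : ℂ) (hφq : aeval lam (φ (q:ℤ)) ≠ 0)
    (hs : s ^ 2 = (aeval lam Δl) ^ 2 - 1)
    (fp : ℤ → ℂ)
    (hfp_rec : ∀ n : ℤ,
      ((a (n - 1) + u (n - 1) : ℝ) : ℂ) * fp (n - 1)
        + ((a n + u n : ℝ) : ℂ) * fp (n + 1)
        + ((b n + v n : ℝ) : ℂ) * fp n = lam * fp n)
    (hfp_bc : ∀ n : ℤ, (p:ℤ) < n →
      fp n = aeval lam (θ n)
        + (aeval lam φh + s) / aeval lam (φ (q:ℤ)) * aeval lam (φ n))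
    (fm : ℤ → ℂ)
    (hfm_rec : ∀ n : ℤ,
      ((a (n - 1) + u (n - 1) : ℝ) : ℂ) * fm (n - 1)
        + ((a n + u n : ℝ) : ℂ) * fm (n + 1)
        + ((b n + v n : ℝ) : ℂ) * fm n = lam * fm n)
    (hfm_bc : ∀ n : ℤ, n ≤ 0 →
      fm n = aeval lam (θ n)
        + (aeval lam φh - s) / aeval lam (φ (q:ℤ)) * aeval lam (φ n))
    :
    aeval lam (φ (q:ℤ)) / (a 0 : ℂ)
        * (((a 0 + u 0 : ℝ) : ℂ) * (fm 0 * fp 1 - fm 1 * fp 0))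
      = 2 * s * (1 + aeval lam Ap) - aeval lam Jp := by
  have ha0 : (a 0 : ℂ) ≠ 0 := by exact_mod_cast (ha_pos 0).ne'
  let a' : ℤ → ℂ := fun n => (a n + u n : ℝ)
  let b' : ℤ → ℂ := fun n => (b n + v n : ℝ)
  have hW : aeval lam (θ q) * aeval lam (φ (q + 1)) - aeval lam (θ (q + 1)) * aeval lam (φ q)
      = 1 := by
    simpa using congrArg (aeval lam) <| IsJacobiSolution.mul_sub_mul_eq_one_of_coeff_eq
      (a := fun n => C (a n)) (b := fun n => C (b n)) hθ_rec hφ_rec hθ0 hθ1 hφ0 hφ1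
      (by simpa using congrArg C (ha_per 0)) (C_ne_zero.2 (ha_pos 0).ne')
  have hdisc : (aeval lam φh + s) * (aeval lam φh - s)
      = -(aeval lam (θ (q + 1)) * aeval lam (φ q)) := by
    simp only [hΔl, hφh, map_mul, map_add, map_sub, aeval_C, map_inv₀, map_ofNat] at hs ⊢
    linear_combination -hs - hW
  have hfp :
      fp = fun n => aeval lam (θt n) + (aeval lam φh + s) / aeval lam (φ q) * aeval lam (φt n) :=
    IsJacobiSolution.eq_of_eqOn_Ioi (fun n => Complex.ofReal_ne_zero.mpr (hat_pos n).ne')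
      (show IsJacobiSolution a' b' lam fp from hfp_rec)
      (IsJacobiSolution.aeval_add_mul (a := fun n => a n + u n) (b := fun n => b n + v n)
        hθt_rec hφt_rec lam _)
      fun n hn => by rw [hfp_bc n hn, hθt_bc n hn, hφt_bc n hn]
  have hfm0 : fm 0 = 1 := by simpa [hθ0, hφ0] using hfm_bc 0 le_rfl
  have hfm1 :
      ((a 0 : ℂ) + u 0) * fm 1 = a 0 * ((aeval lam φh - s) / aeval lam (φ q)) - v 0 := by
    have h := IsJacobiSolution.mul_add_one_eq_of_eq (n := 0)
      (IsJacobiSolution.aeval_add_mul (a := a) (b := b) hθ_rec hφ_rec lam _)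
      (show IsJacobiSolution a' b' lam fm from hfm_rec)
      (by simp [a', hu_supp (-1) (by norm_num)]) (hfm_bc _ (by norm_num)) (hfm_bc _ le_rfl)
    simpa [a', b', hθ0, hθ1, hφ0, hφ1, sub_eq_add_neg] using h
  rw [hfm0, hfp, hAp, hJp]
  simp only [map_mul, map_add, map_sub, map_neg, aeval_C, hθ0, hφ1, map_one,
    Complex.coe_algebraMap]
  push_cast
  field_simp at hfm1 ⊢
  refine mul_left_cancel₀ hφq ?_
  linear_combination -(a 0 * aeval lam (φt 0)) * hdisc
    - (aeval lam (φ q) * aeval lam (θt 0) + (aeval lam φh + s) * aeval lam (φt 0)) * hfm1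

theorem stmt4
    (q : ℕ) (hq : 1 ≤ q)
    (a b : ℤ → ℝ)
    (ha_per : ∀ n : ℤ, a (n + (q : ℤ)) = a n)
    (hb_per : ∀ n : ℤ, b (n + (q : ℤ)) = b n)
    (ha_pos : ∀ n : ℤ, 0 < a n)
    (θ φ : ℤ → Polynomial ℝ)
    (hθ_rec : ∀ n : ℤ,
      C (a (n - 1)) * θ (n - 1) + C (a n) * θ (n + 1) + C (b n) * θ n = X * θ n)
    (hφ_rec : ∀ n : ℤ,
      C (a (n - 1)) * φ (n - 1) + C (a n) * φ (n + 1) + C (b n) * φ n = X * φ n)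
    (hθ0 : θ 0 = 1) (hθ1 : θ 1 = 0) (hφ0 : φ 0 = 0) (hφ1 : φ 1 = 1)
    (Δl : Polynomial ℝ) (hΔl : Δl = C ((2:ℝ)⁻¹) * (φ ((q:ℤ) + 1) + θ (q:ℤ)))
    (φh : Polynomial ℝ) (hφh : φh = C ((2:ℝ)⁻¹) * (φ ((q:ℤ) + 1) - θ (q:ℤ)))
    (p : ℕ) (hp : 1 ≤ p)
    (u v : ℤ → ℝ)
    (hu_supp : ∀ n : ℤ, (n < 0 ∨ (p:ℤ) < n) → u n = 0)
    (hv_supp : ∀ n : ℤ, (n < 0 ∨ (p:ℤ) < n) → v n = 0)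
    (hv0 : v 0 ≠ 0) (hvp : v (p:ℤ) ≠ 0)
    (hat_pos : ∀ n : ℤ, 0 < a n + u n)
    (θt φt : ℤ → Polynomial ℝ)
    (hθt_rec : ∀ n : ℤ,
      C (a (n - 1) + u (n - 1)) * θt (n - 1) + C (a n + u n) * θt (n + 1)
        + C (b n + v n) * θt n = X * θt n)
    (hφt_rec : ∀ n : ℤ,
      C (a (n - 1) + u (n - 1)) * φt (n - 1) + C (a n + u n) * φt (n + 1)
        + C (b n + v n) * φt n = X * φt n)
    (hθt_bc : ∀ n : ℤ, (p:ℤ) < n → θt n = θ n)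
    (hφt_bc : ∀ n : ℤ, (p:ℤ) < n → φt n = φ n)
    (Ap : Polynomial ℝ)
    (hAp : Ap = C ((2:ℝ)⁻¹) *
      ((C ((a 0 + u 0) / a 0) * φt 1 - φ 1) + C (v 0 / a 0) * φt 0 + (θt 0 - θ 0)))
    (Jp : Polynomial ℝ)
    (hJp : Jp = -(C ((a 0 + u 0) / a 0) * φ (q:ℤ) * θt 1
      + φh * (C ((a 0 + u 0) / a 0) * φt 1 - θt 0)
      + C (v 0 / a 0) * (φ (q:ℤ) * θt 0 + φh * φt 0)
      + θ ((q:ℤ) + 1) * φt 0))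
    (lam s : ℂ) (hφq : aeval lam (φ (q:ℤ)) ≠ 0)
    (hs : s ^ 2 = (aeval lam Δl) ^ 2 - 1)
    (fp : ℤ → ℂ)
    (hfp_rec : ∀ n : ℤ,
      ((a (n - 1) + u (n - 1) : ℝ) : ℂ) * fp (n - 1)
        + ((a n + u n : ℝ) : ℂ) * fp (n + 1)
        + ((b n + v n : ℝ) : ℂ) * fp n = lam * fp n)
    (hfp_bc : ∀ n : ℤ, (p:ℤ) < n →
      fp n = aeval lam (θ n)
        + (aeval lam φh + s) / aeval lam (φ (q:ℤ)) * aeval lam (φ n))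
    (fm : ℤ → ℂ)
    (hfm_rec : ∀ n : ℤ,
      ((a (n - 1) + u (n - 1) : ℝ) : ℂ) * fm (n - 1)
        + ((a n + u n : ℝ) : ℂ) * fm (n + 1)
        + ((b n + v n : ℝ) : ℂ) * fm n = lam * fm n)
    (hfm_bc : ∀ n : ℤ, n ≤ 0 →
      fm n = aeval lam (θ n)
        + (aeval lam φh - s) / aeval lam (φ (q:ℤ)) * aeval lam (φ n))
    :
    aeval lam (φ (q:ℤ)) / (a 0 : ℂ)
        * (((a 0 + u 0 : ℝ) : ℂ) * (fm 0 * fp 1 - fm 1 * fp 0))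
      = 2 * s * (1 + aeval lam Ap) - aeval lam Jp :=
  stmt4_general q a b ha_per ha_pos θ φ hθ_rec hφ_rec hθ0 hθ1 hφ0 hφ1 Δl hΔl φh hφh p u v hu_supp
    hat_pos θt φt hθt_rec hφt_rec hθt_bc hφt_bc Ap hAp Jp hJp lam s hφq hs fp hfp_rec hfp_bc fm
    hfm_rec hfm_bc
end

section
/- For every real λ with Δ(λ)² < 1 one has F(λ) ≥ 4(1 − Δ(λ)²) > 0; in particular the polynomial F is strictly positive on the interior of every spectral band (the set where Δ² < 1). -/
open Polynomial Asymptotics Filter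

/-- The Wronskian of two solutions of a three-term recurrence is constant
(along nonnegative indices). -/
lemma wronskian_const_aux (a b y z : ℤ → ℝ) (lam : ℝ)
    (hy : ∀ n : ℤ, a (n - 1) * y (n - 1) + a n * y (n + 1) + b n * y n = lam * y n)
    (hz : ∀ n : ℤ, a (n - 1) * z (n - 1) + a n * z (n + 1) + b n * z n = lam * z n) :
    ∀ k : ℕ, a (k : ℤ) * (y (k : ℤ) * z ((k : ℤ) + 1) - y ((k : ℤ) + 1) * z (k : ℤ))
      = a 0 * (y 0 * z 1 - y 1 * z 0) := by
  intro k
  induction k with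
  | zero => norm_num
  | succ k ih =>
    have hy1 := hy ((k : ℤ) + 1)
    have hz1 := hz ((k : ℤ) + 1)
    simp only [add_sub_cancel_right] at hy1 hz1
    push_cast
    push_cast at ih
    linear_combination ih + y ((k : ℤ) + 1) * hz1 - z ((k : ℤ) + 1) * hy1

set_option maxHeartbeats 2000000 in
theorem stmt6
    (q : ℕ) (hq : 1 ≤ q)
    (a b : ℤ → ℝ)
    (ha_per : ∀ n : ℤ, a (n + (q : ℤ)) = a n)
    (hb_per : ∀ n : ℤ, b (n + (q : ℤ)) = b n)
    (ha_pos : ∀ n : ℤ, 0 < a n)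
    (θ φ : ℤ → Polynomial ℝ)
    (hθ_rec : ∀ n : ℤ,
      C (a (n - 1)) * θ (n - 1) + C (a n) * θ (n + 1) + C (b n) * θ n = X * θ n)
    (hφ_rec : ∀ n : ℤ,
      C (a (n - 1)) * φ (n - 1) + C (a n) * φ (n + 1) + C (b n) * φ n = X * φ n)
    (hθ0 : θ 0 = 1) (hθ1 : θ 1 = 0) (hφ0 : φ 0 = 0) (hφ1 : φ 1 = 1)
    (Δl : Polynomial ℝ) (hΔl : Δl = C ((2:ℝ)⁻¹) * (φ ((q:ℤ) + 1) + θ (q:ℤ)))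
    (φh : Polynomial ℝ) (hφh : φh = C ((2:ℝ)⁻¹) * (φ ((q:ℤ) + 1) - θ (q:ℤ)))
    (p : ℕ) (hp : 1 ≤ p)
    (u v : ℤ → ℝ)
    (hu_supp : ∀ n : ℤ, (n < 0 ∨ (p:ℤ) < n) → u n = 0)
    (hv_supp : ∀ n : ℤ, (n < 0 ∨ (p:ℤ) < n) → v n = 0)
    (hv0 : v 0 ≠ 0) (hvp : v (p:ℤ) ≠ 0)
    (hat_pos : ∀ n : ℤ, 0 < a n + u n)
    (θt φt : ℤ → Polynomial ℝ)
    (hθt_rec : ∀ n : ℤ,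
      C (a (n - 1) + u (n - 1)) * θt (n - 1) + C (a n + u n) * θt (n + 1)
        + C (b n + v n) * θt n = X * θt n)
    (hφt_rec : ∀ n : ℤ,
      C (a (n - 1) + u (n - 1)) * φt (n - 1) + C (a n + u n) * φt (n + 1)
        + C (b n + v n) * φt n = X * φt n)
    (hθt_bc : ∀ n : ℤ, (p:ℤ) < n → θt n = θ n)
    (hφt_bc : ∀ n : ℤ, (p:ℤ) < n → φt n = φ n)
    (Ap : Polynomial ℝ)
    (hAp : Ap = C ((2:ℝ)⁻¹) *
      ((C ((a 0 + u 0) / a 0) * φt 1 - φ 1) + C (v 0 / a 0) * φt 0 + (θt 0 - θ 0)))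
    (Jp : Polynomial ℝ)
    (hJp : Jp = -(C ((a 0 + u 0) / a 0) * φ (q:ℤ) * θt 1
      + φh * (C ((a 0 + u 0) / a 0) * φt 1 - θt 0)
      + C (v 0 / a 0) * (φ (q:ℤ) * θt 0 + φh * φt 0)
      + θ ((q:ℤ) + 1) * φt 0))
    (Fp : Polynomial ℝ)
    (hFp : Fp = 4 * (1 - Δl ^ 2) * (1 + Ap) ^ 2 + Jp ^ 2)
    :
    ∀ lam : ℝ, (Δl.eval lam) ^ 2 < 1 →
      4 * (1 - (Δl.eval lam) ^ 2) ≤ Fp.eval lam ∧ 0 < 4 * (1 - (Δl.eval lam) ^ 2) := by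
  intro lam hband
  have ha0 : a 0 ≠ 0 := ne_of_gt (ha_pos 0)
  -- evaluated recurrences
  have hθR : ∀ n : ℤ, a (n - 1) * (θ (n - 1)).eval lam + a n * (θ (n + 1)).eval lam
      + b n * (θ n).eval lam = lam * (θ n).eval lam := fun n => by
    simpa using congrArg (Polynomial.eval lam) (hθ_rec n)
  have hφR : ∀ n : ℤ, a (n - 1) * (φ (n - 1)).eval lam + a n * (φ (n + 1)).eval lam
      + b n * (φ n).eval lam = lam * (φ n).eval lam := fun n => by
    simpa using congrArg (Polynomial.eval lam) (hφ_rec n)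
  have hθtR : ∀ n : ℤ, (a (n - 1) + u (n - 1)) * (θt (n - 1)).eval lam
      + (a n + u n) * (θt (n + 1)).eval lam
      + (b n + v n) * (θt n).eval lam = lam * (θt n).eval lam := fun n => by
    simpa using congrArg (Polynomial.eval lam) (hθt_rec n)
  have hφtR : ∀ n : ℤ, (a (n - 1) + u (n - 1)) * (φt (n - 1)).eval lam
      + (a n + u n) * (φt (n + 1)).eval lam
      + (b n + v n) * (φt n).eval lam = lam * (φt n).eval lam := fun n => by
    simpa using congrArg (Polynomial.eval lam) (hφt_rec n)
  have hW := wronskian_const_aux a b (fun n => (θ n).eval lam) (fun n => (φ n).eval lam)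
    lam hθR hφR
  have hWt := wronskian_const_aux (fun n => a n + u n) (fun n => b n + v n)
    (fun n => (θt n).eval lam) (fun n => (φt n).eval lam) lam hθtR hφtR
  -- unperturbed Wronskian over one period
  have h1 : a (q : ℤ) * ((θ (q:ℤ)).eval lam * (φ ((q:ℤ) + 1)).eval lam
      - (θ ((q:ℤ) + 1)).eval lam * (φ (q:ℤ)).eval lam)
      = a 0 * ((θ 0).eval lam * (φ 1).eval lam - (θ 1).eval lam * (φ 0).eval lam) := hW q
  rw [hθ0, hθ1, hφ0, hφ1] at h1
  simp only [eval_one, eval_zero, one_mul, mul_one, zero_mul, mul_zero, sub_zero] at h1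
  have haq : a (q : ℤ) = a 0 := by simpa using ha_per 0
  rw [haq] at h1
  have hC1 : (θ (q:ℤ)).eval lam * (φ ((q:ℤ) + 1)).eval lam
      - (θ ((q:ℤ) + 1)).eval lam * (φ (q:ℤ)).eval lam = 1 :=
    mul_left_cancel₀ ha0 (by rw [mul_one]; exact h1)
  -- unperturbed Wronskian at p+1
  have h1p : a ((p+1 : ℕ) : ℤ) * ((θ ((p+1:ℕ) : ℤ)).eval lam * (φ (((p+1:ℕ):ℤ) + 1)).eval lam
      - (θ (((p+1:ℕ):ℤ) + 1)).eval lam * (φ ((p+1:ℕ):ℤ)).eval lam)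
      = a 0 * ((θ 0).eval lam * (φ 1).eval lam - (θ 1).eval lam * (φ 0).eval lam) := hW (p+1)
  rw [hθ0, hθ1, hφ0, hφ1] at h1p
  simp only [eval_one, eval_zero, one_mul, mul_one, zero_mul, mul_zero, sub_zero] at h1p
  -- perturbed Wronskian at p+1 equals perturbed Wronskian at 0
  have h2 : (a ((p+1:ℕ):ℤ) + u ((p+1:ℕ):ℤ)) * ((θt ((p+1:ℕ):ℤ)).eval lam
        * (φt (((p+1:ℕ):ℤ) + 1)).eval lam
      - (θt (((p+1:ℕ):ℤ) + 1)).eval lam * (φt ((p+1:ℕ):ℤ)).eval lam)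
      = (a 0 + u 0) * ((θt 0).eval lam * (φt 1).eval lam
        - (θt 1).eval lam * (φt 0).eval lam) := hWt (p+1)
  have hbp : (p : ℤ) < ((p+1:ℕ):ℤ) := by push_cast; linarith
  have hbp2 : (p : ℤ) < ((p+1:ℕ):ℤ) + 1 := by push_cast; linarith
  rw [hθt_bc _ hbp, hθt_bc _ hbp2, hφt_bc _ hbp, hφt_bc _ hbp2,
    hu_supp _ (Or.inr hbp), add_zero] at h2
  have hC2a : (a 0 + u 0) * ((θt 0).eval lam * (φt 1).eval lam
      - (θt 1).eval lam * (φt 0).eval lam) = a 0 := h2.symm.trans h1p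
  -- evaluations of the defined polynomials
  have hΔv : Δl.eval lam = 2⁻¹ * ((φ ((q:ℤ) + 1)).eval lam + (θ (q:ℤ)).eval lam) := by
    rw [hΔl]; simp
  have hAv : Ap.eval lam = 2⁻¹ * (((a 0 + u 0) / a 0 * (φt 1).eval lam - 1)
      + v 0 / a 0 * (φt 0).eval lam + ((θt 0).eval lam - 1)) := by
    rw [hAp, hθ0, hφ1]; simp
  have hJv : Jp.eval lam = -((a 0 + u 0) / a 0 * (φ (q:ℤ)).eval lam * (θt 1).eval lam
      + 2⁻¹ * ((φ ((q:ℤ) + 1)).eval lam - (θ (q:ℤ)).eval lam)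
        * ((a 0 + u 0) / a 0 * (φt 1).eval lam - (θt 0).eval lam)
      + v 0 / a 0 * ((φ (q:ℤ)).eval lam * (θt 0).eval lam
        + 2⁻¹ * ((φ ((q:ℤ) + 1)).eval lam - (θ (q:ℤ)).eval lam) * (φt 0).eval lam)
      + (θ ((q:ℤ) + 1)).eval lam * (φt 0).eval lam) := by
    rw [hJp, hφh]; simp
  have hFpe : Fp.eval lam = 4 * (1 - (Δl.eval lam) ^ 2) * (1 + Ap.eval lam) ^ 2
      + (Jp.eval lam) ^ 2 := by
    rw [hFp]; simp
  rw [hΔv] at hband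
  rw [hFpe, hΔv, hAv, hJv]
  -- abbreviations
  set Tq := (θ (q:ℤ)).eval lam with hTqd
  set Tq1 := (θ ((q:ℤ) + 1)).eval lam with hTq1d
  set Fq := (φ (q:ℤ)).eval lam with hFqd
  set Fq1 := (φ ((q:ℤ) + 1)).eval lam with hFq1d
  set t0 := (θt 0).eval lam with ht0d
  set t1 := (θt 1).eval lam with ht1d
  set f0 := (φt 0).eval lam with hf0d
  set f1 := (φt 1).eval lam with hf1d
  set r := (a 0 + u 0) / a 0 with hrd
  set w := v 0 / a 0 with hwd
  set Dv := 2⁻¹ * (Fq1 + Tq) with hDvd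
  set phv := 2⁻¹ * (Fq1 - Tq) with hphvd
  -- perturbed Wronskian relation in normalized form
  have hC2 : t0 * (r * f1 + w * f0) - (r * t1 + w * t0) * f0 = 1 := by
    rw [hrd, hwd]
    field_simp
    linear_combination hC2a
  have hS : 0 < 1 - Dv ^ 2 := by nlinarith [hband]
  have hsub : 1 - Dv ^ 2 = -phv ^ 2 - Tq1 * Fq := by
    rw [hDvd, hphvd]; linear_combination -hC1
  have hFq2 : 0 < Fq ^ 2 := by
    rcases eq_or_ne Fq 0 with h | h
    · exfalso
      rw [h] at hsub
      nlinarith [sq_nonneg phv]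
    · positivity
  have key : Fq ^ 2 * ((-(Fq * (r * t1 + w * t0) + phv * ((r * f1 + w * f0) - t0)
        + Tq1 * f0)) ^ 2
      + 4 * (1 - Dv ^ 2) * (((r * f1 + w * f0) + t0) / 2) ^ 2 - 4 * (1 - Dv ^ 2))
      = (1 - Dv ^ 2) * (Fq * ((r * f1 + w * f0) - t0) - 2 * phv * f0) ^ 2
      + (Fq ^ 2 * (r * t1 + w * t0) + Fq * phv * ((r * f1 + w * f0) - t0)
        - (2 * phv ^ 2 + Tq1 * Fq) * f0) ^ 2 := by
    linear_combination (4 * (-phv ^ 2 - Tq1 * Fq) * Fq ^ 2) * hC2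
      + (Fq ^ 2 * (4 * (((r * f1 + w * f0) + t0) / 2) ^ 2 - 4)
        - (Fq * ((r * f1 + w * f0) - t0) - 2 * phv * f0) ^ 2) * hsub
  have hN : 0 ≤ (1 - Dv ^ 2) * (Fq * ((r * f1 + w * f0) - t0) - 2 * phv * f0) ^ 2
      + (Fq ^ 2 * (r * t1 + w * t0) + Fq * phv * ((r * f1 + w * f0) - t0)
        - (2 * phv ^ 2 + Tq1 * Fq) * f0) ^ 2 :=
    add_nonneg (mul_nonneg hS.le (sq_nonneg _)) (sq_nonneg _)
  rw [← key] at hN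
  have hE : 0 ≤ (-(Fq * (r * t1 + w * t0) + phv * ((r * f1 + w * f0) - t0)
        + Tq1 * f0)) ^ 2
      + 4 * (1 - Dv ^ 2) * (((r * f1 + w * f0) + t0) / 2) ^ 2 - 4 * (1 - Dv ^ 2) :=
    le_of_mul_le_mul_left (by simpa using hN) hFq2
  constructor
  · linarith [hE]
  · linarith [hS]
end

section
/- Let e⁻ ≤ e⁺ be real numbers with Δ(e⁻)² = Δ(e⁺)² = 1 and Δ(λ)² > 1 for all λ ∈ (e⁻, e⁺), and suppose there is δ > 0 such that Δ(λ)² < 1 for all λ ∈ (e⁻ − δ, e⁻) ∪ (e⁺, e⁺ + δ) (i.e. [e⁻, e⁺] is a closed spectral gap separating two bands). Then the number of real zeros of the polynomial F in [e⁻, e⁺], counted with multiplicity, is even. -/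
/-!
`F = 4(1 - Δ²)(1 + A)² + J²` is nonnegative wherever `Δ² < 1`, so on the bands adjacent to the
gap. A real polynomial that is positive at two points has an even number of roots between them,
counted with multiplicity, since each such root flips its sign.
-/

open Polynomial Filter Set Topology

theorem Multiset.prod_eq_neg_one_pow_card_filter_neg_mul_prod_abs (s : Multiset ℝ) :
    s.prod = (-1) ^ card (s.filter (· < 0)) * (s.map abs).prod := by
  induction s using Multiset.induction_on with
  | empty => simp
  | cons a s ih =>
    rcases lt_or_ge a 0 with ha | ha
    · rw [filter_cons_of_pos (p := (· < 0)) s ha, prod_cons, card_cons, map_cons, prod_cons, ih,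
        abs_of_neg ha]
      ring
    · rw [filter_cons_of_neg (p := (· < 0)) s ha.not_gt, prod_cons, map_cons, prod_cons, ih,
        abs_of_nonneg ha]
      ring

theorem Multiset.even_card_filter_neg_of_prod_pos {s : Multiset ℝ} (hs : 0 < s.prod) :
    Even (card (s.filter (· < 0))) := by
  rw [prod_eq_neg_one_pow_card_filter_neg_mul_prod_abs] at hs
  have habs : 0 ≤ (s.map abs).prod := prod_nonneg fun x hx ↦ by
    obtain ⟨y, -, rfl⟩ := mem_map.1 hx
    exact abs_nonneg y
  refine (Nat.even_or_odd _).resolve_right fun hodd ↦ ?_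
  rw [hodd.neg_one_pow] at hs
  linarith

namespace Polynomial

theorem eventually_nhdsNE_eval_ne_zero {R : Type*} [CommRing R] [IsDomain R] [TopologicalSpace R]
    [T1Space R] {p : R[X]} (hp : p ≠ 0) (a : R) : ∀ᶠ x in 𝓝[≠] a, p.eval x ≠ 0 :=
  nhdsNE_le_cofinite a (finite_setOfPred_isRoot hp).eventually_cofinite_notMem

theorem eval_mul_eval_pos_of_roots_eq_zero {q : ℝ[X]} (hq : q ≠ 0) (hroots : q.roots = 0)
    (x y : ℝ) : 0 < q.eval x * q.eval y := by
  have hne : ∀ z, q.eval z ≠ 0 := fun z hz ↦ by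
    simpa [hroots] using (mem_roots hq).2 hz
  by_contra! hle
  have hzero : (0 : ℝ) ∈ uIcc (q.eval x) (q.eval y) := by
    rcases (hne x).lt_or_gt with hx | hx
    · exact mem_uIcc.2 <| .inl ⟨hx.le, nonneg_of_mul_nonpos_right hle hx⟩
    · exact mem_uIcc.2 <| .inr ⟨nonpos_of_mul_nonpos_right hle hx, hx.le⟩
  obtain ⟨z, -, hz⟩ := intermediate_value_uIcc q.continuous.continuousOn hzero
  exact hne z hz

/-- Sign counting: each root strictly between `x₁` and `x₂` flips the sign of
`p.eval x₁ * p.eval x₂`, and no other root does. -/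
theorem even_card_roots_Icc_of_eval_mul_eval_pos {p : ℝ[X]} {x₁ x₂ : ℝ} (hx : x₁ ≤ x₂)
    (hpos : 0 < p.eval x₁ * p.eval x₂) :
    Even (Multiset.card (p.roots.filter fun x ↦ x₁ ≤ x ∧ x ≤ x₂)) := by
  have hp : p ≠ 0 := by rintro rfl; simp at hpos
  obtain ⟨q, hpq, -, hq⟩ := exists_prod_multiset_X_sub_C_mul p
  have hq0 : q ≠ 0 := by rintro rfl; exact hp (by rw [← hpq, mul_zero])
  have heval : p.eval x₁ * p.eval x₂ =
      (p.roots.map fun r ↦ (x₁ - r) * (x₂ - r)).prod * (q.eval x₁ * q.eval x₂) := by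
    conv_lhs => rw [← hpq]
    simp only [eval_mul, eval_multiset_prod, Multiset.map_map, Function.comp_def, eval_sub,
      eval_X, eval_C, Multiset.prod_map_mul]
    ring
  have hprod : 0 < (p.roots.map fun r ↦ (x₁ - r) * (x₂ - r)).prod :=
    pos_of_mul_pos_left (heval ▸ hpos) (eval_mul_eval_pos_of_roots_eq_zero hq0 hq x₁ x₂).le
  have hsign := Multiset.even_card_filter_neg_of_prod_pos hprod
  rw [Multiset.filter_map, Multiset.card_map] at hsign
  convert hsign using 2
  refine Multiset.filter_congr fun r hr ↦ ?_
  have hroot : p.eval r = 0 := (mem_roots hp).1 hr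
  have h₁ : x₁ ≠ r := by rintro rfl; simp [hroot] at hpos
  have h₂ : x₂ ≠ r := by rintro rfl; simp [hroot] at hpos
  simp only [Function.comp_apply, mul_neg_iff, sub_pos, sub_neg]
  constructor
  · rintro ⟨h1, h2⟩
    exact .inr ⟨lt_of_le_of_ne h1 h₁, lt_of_le_of_ne h2 h₂.symm⟩
  · rintro (⟨h1, h2⟩ | ⟨h1, h2⟩)
    · linarith
    · exact ⟨h1.le, h2.le⟩

/-- Nudging `a` and `b` outwards past all nearby roots gives points where `p` is positive,
without gaining roots. -/
theorem even_card_roots_Icc_of_nonneg_near {p : ℝ[X]} {a b δ : ℝ} (hab : a ≤ b) (hδ : 0 < δ)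
    (hleft : ∀ x ∈ Ioo (a - δ) a, 0 ≤ p.eval x) (hright : ∀ x ∈ Ioo b (b + δ), 0 ≤ p.eval x) :
    Even (Multiset.card (p.roots.filter fun x ↦ a ≤ x ∧ x ≤ b)) := by
  rcases eq_or_ne p 0 with rfl | hp
  · simp
  have hposL : ∀ᶠ x in 𝓝[<] a, 0 < p.eval x :=
    ((eventually_nhdsNE_eval_ne_zero hp a).filter_mono (nhdsLT_le_nhdsNE a)).and
      (Ioo_mem_nhdsLT (by linarith)) |>.mono fun x hx ↦ (hleft x hx.2).lt_of_ne' hx.1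
  have hposR : ∀ᶠ x in 𝓝[>] b, 0 < p.eval x :=
    ((eventually_nhdsNE_eval_ne_zero hp b).filter_mono (nhdsGT_le_nhdsNE b)).and
      (Ioo_mem_nhdsGT (by linarith)) |>.mono fun x hx ↦ (hright x hx.2).lt_of_ne' hx.1
  obtain ⟨l, hl, hlsub⟩ := mem_nhdsLT_iff_exists_Ioo_subset.1 hposL
  obtain ⟨r, hr, hrsub⟩ := mem_nhdsGT_iff_exists_Ioo_subset.1 hposR
  obtain ⟨x₁, hx₁⟩ := nonempty_Ioo.2 (mem_Iio.1 hl)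
  obtain ⟨x₂, hx₂⟩ := nonempty_Ioo.2 (mem_Ioi.1 hr)
  have hcount := even_card_roots_Icc_of_eval_mul_eval_pos (p := p)
    (hx₁.2.le.trans (hab.trans hx₂.1.le)) (mul_pos (hlsub hx₁) (hrsub hx₂))
  convert hcount using 2
  refine Multiset.filter_congr fun z hz ↦ ?_
  have hroot : p.eval z = 0 := (mem_roots hp).1 hz
  have hnotL : z ∉ Ioo l a := fun h ↦ (hlsub h).ne' hroot
  have hnotR : z ∉ Ioo b r := fun h ↦ (hrsub h).ne' hroot
  simp only [mem_Ioo, not_and_or, not_lt] at hnotL hnotR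
  constructor
  · rintro ⟨h1, h2⟩
    constructor <;> linarith [hx₁.1, hx₁.2, hx₂.1, hx₂.2]
  · rintro ⟨h1, h2⟩
    constructor
    · rcases hnotL with h | h <;> linarith [hx₁.1, hx₁.2]
    · rcases hnotR with h | h <;> linarith [hx₂.1, hx₂.2]

theorem eval_four_mul_one_sub_sq_mul_sq_add_sq_nonneg (Δ A J : ℝ[X]) {x : ℝ}
    (hx : Δ.eval x ^ 2 < 1) : 0 ≤ (4 * (1 - Δ ^ 2) * (1 + A) ^ 2 + J ^ 2).eval x := by
  simp only [eval_add, eval_mul, eval_pow, eval_sub, eval_one, eval_ofNat]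
  have : 0 ≤ 1 - Δ.eval x ^ 2 := by linarith
  positivity

end Polynomial

theorem stmt7_general
    (Δl : Polynomial ℝ)
    (Ap : Polynomial ℝ)
    (Jp : Polynomial ℝ)
    (Fp : Polynomial ℝ)
    (hFp : Fp = 4 * (1 - Δl ^ 2) * (1 + Ap) ^ 2 + Jp ^ 2)
    (em ep : ℝ) (hle : em ≤ ep)
    (δ : ℝ) (hδ : 0 < δ)
    (hband : ∀ x : ℝ, (em - δ < x ∧ x < em) ∨ (ep < x ∧ x < ep + δ) →
      (Δl.eval x) ^ 2 < 1) :
    Even (Multiset.card (Multiset.filter (fun x => em ≤ x ∧ x ≤ ep) Fp.roots)) := by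
  subst hFp
  exact even_card_roots_Icc_of_nonneg_near hle hδ
    (fun x hx ↦ eval_four_mul_one_sub_sq_mul_sq_add_sq_nonneg _ _ _ (hband x (.inl hx)))
    (fun x hx ↦ eval_four_mul_one_sub_sq_mul_sq_add_sq_nonneg _ _ _ (hband x (.inr hx)))

theorem stmt7
    (q : ℕ) (hq : 1 ≤ q)
    (a b : ℤ → ℝ)
    (ha_per : ∀ n : ℤ, a (n + (q : ℤ)) = a n)
    (hb_per : ∀ n : ℤ, b (n + (q : ℤ)) = b n)
    (ha_pos : ∀ n : ℤ, 0 < a n)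
    (θ φ : ℤ → Polynomial ℝ)
    (hθ_rec : ∀ n : ℤ,
      C (a (n - 1)) * θ (n - 1) + C (a n) * θ (n + 1) + C (b n) * θ n = X * θ n)
    (hφ_rec : ∀ n : ℤ,
      C (a (n - 1)) * φ (n - 1) + C (a n) * φ (n + 1) + C (b n) * φ n = X * φ n)
    (hθ0 : θ 0 = 1) (hθ1 : θ 1 = 0) (hφ0 : φ 0 = 0) (hφ1 : φ 1 = 1)
    (Δl : Polynomial ℝ) (hΔl : Δl = C ((2:ℝ)⁻¹) * (φ ((q:ℤ) + 1) + θ (q:ℤ)))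
    (φh : Polynomial ℝ) (hφh : φh = C ((2:ℝ)⁻¹) * (φ ((q:ℤ) + 1) - θ (q:ℤ)))
    (p : ℕ) (hp : 1 ≤ p)
    (u v : ℤ → ℝ)
    (hu_supp : ∀ n : ℤ, (n < 0 ∨ (p:ℤ) < n) → u n = 0)
    (hv_supp : ∀ n : ℤ, (n < 0 ∨ (p:ℤ) < n) → v n = 0)
    (hv0 : v 0 ≠ 0) (hvp : v (p:ℤ) ≠ 0)
    (hat_pos : ∀ n : ℤ, 0 < a n + u n)
    (θt φt : ℤ → Polynomial ℝ)
    (hθt_rec : ∀ n : ℤ,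
      C (a (n - 1) + u (n - 1)) * θt (n - 1) + C (a n + u n) * θt (n + 1)
        + C (b n + v n) * θt n = X * θt n)
    (hφt_rec : ∀ n : ℤ,
      C (a (n - 1) + u (n - 1)) * φt (n - 1) + C (a n + u n) * φt (n + 1)
        + C (b n + v n) * φt n = X * φt n)
    (hθt_bc : ∀ n : ℤ, (p:ℤ) < n → θt n = θ n)
    (hφt_bc : ∀ n : ℤ, (p:ℤ) < n → φt n = φ n)
    (Ap : Polynomial ℝ)
    (hAp : Ap = C ((2:ℝ)⁻¹) *
      ((C ((a 0 + u 0) / a 0) * φt 1 - φ 1) + C (v 0 / a 0) * φt 0 + (θt 0 - θ 0)))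
    (Jp : Polynomial ℝ)
    (hJp : Jp = -(C ((a 0 + u 0) / a 0) * φ (q:ℤ) * θt 1
      + φh * (C ((a 0 + u 0) / a 0) * φt 1 - θt 0)
      + C (v 0 / a 0) * (φ (q:ℤ) * θt 0 + φh * φt 0)
      + θ ((q:ℤ) + 1) * φt 0))
    (Fp : Polynomial ℝ)
    (hFp : Fp = 4 * (1 - Δl ^ 2) * (1 + Ap) ^ 2 + Jp ^ 2)
    (em ep : ℝ) (hle : em ≤ ep)
    (hΔem : (Δl.eval em) ^ 2 = 1) (hΔep : (Δl.eval ep) ^ 2 = 1)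
    (hgap : ∀ x : ℝ, em < x → x < ep → 1 < (Δl.eval x) ^ 2)
    (δ : ℝ) (hδ : 0 < δ)
    (hband : ∀ x : ℝ, (em - δ < x ∧ x < em) ∨ (ep < x ∧ x < ep + δ) →
      (Δl.eval x) ^ 2 < 1) :
    Even (Multiset.card (Multiset.filter (fun x => em ≤ x ∧ x ≤ ep) Fp.roots)) :=
  stmt7_general Δl Ap Jp Fp hFp em ep hle δ hδ hband
end

section
/- Let E ∈ ℝ satisfy Δ(E)² = 1 and φ_q(E) ≠ 0 (a band edge that is not a Dirichlet eigenvalue). Then J_1(E) = −(φ_q(E)/a⁰_0)·Σ_{k=0}^{p} v_k·(θ_k(E) + (φ̂(E)/φ_q(E))·φ_k(E))², where J_1(λ) = −(1/a⁰_0)·Σ_{k=0}^{p} v_k·(φ_q(λ)θ_k(λ)² + 2φ̂(λ)θ_k(λ)φ_k(λ) − θ_{q+1}(λ)φ_k(λ)²). -/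
/-!
The Casoratian `a n (θ n φ (n+1) - θ (n+1) φ n)` of the two fundamental solutions is independent
of `n`, and since `a` is `q`-periodic its value at `n = q` gives `θ_q φ_{q+1} - θ_{q+1} φ_q = 1`.
Because `Δ² - φ̂² = θ_q φ_{q+1}`, at a band edge (`Δ(E)² = 1`) this becomes
`φ̂(E)² = -θ_{q+1}(E) φ_q(E)`: the binary quadratic form `φ_q θ² + 2 φ̂ θ φ - θ_{q+1} φ²` of each
summand of `J_1(E)` has zero discriminant, hence is `φ_q (θ + (φ̂/φ_q) φ)²`.
-/

open Polynomial

section Casoratian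

variable {R : Type*} [CommRing R]

def casoratian (A y z : ℤ → R) (n : ℤ) : R :=
  A n * (y n * z (n + 1) - y (n + 1) * z n)

variable {A B : ℤ → R} {L : R} {y z : ℤ → R}

theorem casoratian_succ
    (hy : ∀ n, A (n - 1) * y (n - 1) + A n * y (n + 1) + B n * y n = L * y n)
    (hz : ∀ n, A (n - 1) * z (n - 1) + A n * z (n + 1) + B n * z n = L * z n) (n : ℤ) :
    casoratian A y z (n + 1) = casoratian A y z n := by
  have hyn := hy (n + 1)
  have hzn := hz (n + 1)
  simp only [add_sub_cancel_right] at hyn hzn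
  unfold casoratian
  linear_combination y (n + 1) * hzn - z (n + 1) * hyn

theorem casoratian_eq_casoratian_zero
    (hy : ∀ n, A (n - 1) * y (n - 1) + A n * y (n + 1) + B n * y n = L * y n)
    (hz : ∀ n, A (n - 1) * z (n - 1) + A n * z (n + 1) + B n * z n = L * z n) (n : ℤ) :
    casoratian A y z n = casoratian A y z 0 := by
  induction n using Int.induction_on with
  | zero => rfl
  | succ i ih => rw [casoratian_succ hy hz, ih]
  | pred i ih => rw [← ih, ← casoratian_succ hy hz, sub_add_cancel]

end Casoratian

theorem sq_half_sub_eq_of_sq_half_add_eq_one {t u c d : ℝ} (hW : t * u - d * c = 1)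
    (hΔ : (2⁻¹ * (u + t)) ^ 2 = 1) : (2⁻¹ * (u - t)) ^ 2 = -(d * c) := by
  linear_combination hΔ - hW

theorem mul_sq_add_two_mul_mul_sub_mul_sq {K : Type*} [Field K] {c h d : K} (hc : c ≠ 0)
    (hdisc : h ^ 2 = -(d * c)) (x y : K) :
    c * x ^ 2 + 2 * h * x * y - d * y ^ 2 = c * (x + h / c * y) ^ 2 := by
  field_simp
  linear_combination (-y ^ 2) * hdisc

theorem stmt17_general
    (q : ℕ)
    (a b : ℤ → ℝ)
    (ha_per : ∀ n : ℤ, a (n + (q : ℤ)) = a n)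
    (ha_pos : ∀ n : ℤ, 0 < a n)
    (θ φ : ℤ → Polynomial ℝ)
    (hθ_rec : ∀ n : ℤ,
      C (a (n - 1)) * θ (n - 1) + C (a n) * θ (n + 1) + C (b n) * θ n = X * θ n)
    (hφ_rec : ∀ n : ℤ,
      C (a (n - 1)) * φ (n - 1) + C (a n) * φ (n + 1) + C (b n) * φ n = X * φ n)
    (hθ0 : θ 0 = 1) (hθ1 : θ 1 = 0) (hφ0 : φ 0 = 0) (hφ1 : φ 1 = 1)
    (Δl : Polynomial ℝ) (hΔl : Δl = C ((2:ℝ)⁻¹) * (φ ((q:ℤ) + 1) + θ (q:ℤ)))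
    (φh : Polynomial ℝ) (hφh : φh = C ((2:ℝ)⁻¹) * (φ ((q:ℤ) + 1) - θ (q:ℤ)))
    (p : ℕ)
    (v : ℤ → ℝ)
    (J1 : ℝ → ℝ)
    (hJ1 : ∀ x : ℝ, J1 x = -(1 / a 0) * ∑ k ∈ Finset.range (p + 1), v (k : ℤ) *
      ((φ (q:ℤ)).eval x * ((θ (k:ℤ)).eval x) ^ 2
        + 2 * φh.eval x * (θ (k:ℤ)).eval x * (φ (k:ℤ)).eval x
        - (θ ((q:ℤ) + 1)).eval x * ((φ (k:ℤ)).eval x) ^ 2))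
    (E : ℝ) (hΔE : (Δl.eval E) ^ 2 = 1) (hφqE : (φ (q:ℤ)).eval E ≠ 0) :
    J1 E = -((φ (q:ℤ)).eval E / a 0) * ∑ k ∈ Finset.range (p + 1), v (k : ℤ) *
      ((θ (k:ℤ)).eval E + φh.eval E / (φ (q:ℤ)).eval E * (φ (k:ℤ)).eval E) ^ 2 := by
  have ha0 : a 0 ≠ 0 := (ha_pos 0).ne'
  have haq : a q = a 0 := by simpa using ha_per 0
  have hWq : (θ q).eval E * (φ (q + 1)).eval E - (θ (q + 1)).eval E * (φ q).eval E = 1 := by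
    have h := congrArg (eval E) (casoratian_eq_casoratian_zero
      (A := fun n => C (a n)) (B := fun n => C (b n)) hθ_rec hφ_rec q)
    simp only [casoratian, hθ0, hθ1, hφ0, hφ1, zero_add, eval_mul, eval_sub, eval_C, eval_one,
      eval_zero, haq] at h
    simpa [ha0] using h
  have hdisc : (φh.eval E) ^ 2 = -((θ (q + 1)).eval E * (φ q).eval E) := by
    subst hΔl hφh
    simp only [eval_mul, eval_C, eval_add, eval_sub] at hΔE ⊢
    exact sq_half_sub_eq_of_sq_half_add_eq_one hWq hΔE
  rw [hJ1, Finset.mul_sum, Finset.mul_sum]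
  refine Finset.sum_congr rfl fun k _ => ?_
  rw [mul_sq_add_two_mul_mul_sub_mul_sq hφqE hdisc]
  field_simp

theorem stmt17
    (q : ℕ) (hq : 1 ≤ q)
    (a b : ℤ → ℝ)
    (ha_per : ∀ n : ℤ, a (n + (q : ℤ)) = a n)
    (hb_per : ∀ n : ℤ, b (n + (q : ℤ)) = b n)
    (ha_pos : ∀ n : ℤ, 0 < a n)
    (θ φ : ℤ → Polynomial ℝ)
    (hθ_rec : ∀ n : ℤ,
      C (a (n - 1)) * θ (n - 1) + C (a n) * θ (n + 1) + C (b n) * θ n = X * θ n)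
    (hφ_rec : ∀ n : ℤ,
      C (a (n - 1)) * φ (n - 1) + C (a n) * φ (n + 1) + C (b n) * φ n = X * φ n)
    (hθ0 : θ 0 = 1) (hθ1 : θ 1 = 0) (hφ0 : φ 0 = 0) (hφ1 : φ 1 = 1)
    (Δl : Polynomial ℝ) (hΔl : Δl = C ((2:ℝ)⁻¹) * (φ ((q:ℤ) + 1) + θ (q:ℤ)))
    (φh : Polynomial ℝ) (hφh : φh = C ((2:ℝ)⁻¹) * (φ ((q:ℤ) + 1) - θ (q:ℤ)))
    (p : ℕ) (hp : 1 ≤ p)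
    (v : ℤ → ℝ)
    (hv_supp : ∀ n : ℤ, (n < 0 ∨ (p:ℤ) < n) → v n = 0)
    (hv0 : v 0 ≠ 0) (hvp : v (p:ℤ) ≠ 0)
    (J1 : ℝ → ℝ)
    (hJ1 : ∀ x : ℝ, J1 x = -(1 / a 0) * ∑ k ∈ Finset.range (p + 1), v (k : ℤ) *
      ((φ (q:ℤ)).eval x * ((θ (k:ℤ)).eval x) ^ 2
        + 2 * φh.eval x * (θ (k:ℤ)).eval x * (φ (k:ℤ)).eval x
        - (θ ((q:ℤ) + 1)).eval x * ((φ (k:ℤ)).eval x) ^ 2))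
    (E : ℝ) (hΔE : (Δl.eval E) ^ 2 = 1) (hφqE : (φ (q:ℤ)).eval E ≠ 0) :
    J1 E = -((φ (q:ℤ)).eval E / a 0) * ∑ k ∈ Finset.range (p + 1), v (k : ℤ) *
      ((θ (k:ℤ)).eval E + φh.eval E / (φ (q:ℤ)).eval E * (φ (k:ℤ)).eval E) ^ 2 :=
  stmt17_general q a b ha_per ha_pos θ φ hθ_rec hφ_rec hθ0 hθ1 hφ0 hφ1 Δl hΔl φh hφh p v J1 hJ1 E
    hΔE hφqE
end
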